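/- For n = 4 players, there exists a cake instance where every envy-free complete connected division has egalitarian welfare at most 1/4 + 2ε, while some envy-free partial connected division has egalitarian welfare at least 1/2 - 2ε; hence the egalitarian dumping paradox for 4 players can be made arbitrarily close to 2. -/

import Mathlib

open MeasureTheory Set
open scoped ENNReal

/-- A connected division of the cake `[0,1]` among `n` players: each player gets an
open interval, the intervals are pairwise disjoint and contained in `[0,1]`. -/
structure ConnDiv (n : ℕ) where
  pieces : Fin n → Set ℝ
  isInterval : ∀ i, ∃ a b : ℝ, pieces i = Set.Ioo a b
  subset : ∀ i, pieces i ⊆ Set.Icc (0:ℝ) 1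
  disj : Pairwise fun i j => Disjoint (pieces i) (pieces j)

/-- A connected division is complete if the closures of the pieces cover `[0,1]`. -/
def ConnDiv.Complete {n : ℕ} (d : ConnDiv n) : Prop :=
  Set.Icc (0:ℝ) 1 ⊆ ⋃ i, closure (d.pieces i)

/-- Envy-freeness: every player weakly prefers her own piece. -/
def EnvyFree {n : ℕ} (v : Fin n → Measure ℝ) (d : ConnDiv n) : Prop :=
  ∀ i j, v i (d.pieces j) ≤ v i (d.pieces i)

/-- Utilitarian welfare: sum of own-piece values. -/
noncomputable def util {n : ℕ} (v : Fin n → Measure ℝ) (d : ConnDiv n) : ℝ≥0∞ :=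
  ∑ i, v i (d.pieces i)

/-- Egalitarian welfare: minimum own-piece value. -/
noncomputable def egal {n : ℕ} (v : Fin n → Measure ℝ) (d : ConnDiv n) : ℝ≥0∞ :=
  ⨅ i, v i (d.pieces i)

/-- The uniform measure of total mass `m` on the interval `(a,b)`. -/
noncomputable def unifOn (a b m : ℝ) : Measure ℝ :=
  ENNReal.ofReal (m / (b - a)) • volume.restrict (Set.Ioo a b)

/-- Player 1's measure: `1/2 - ε` on `(0,ε)`, `3ε` on `(3/4, 3/4+3ε)`,
`1/2 - 2ε` on `(1-ε,1)`, uniform within each interval. -/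
noncomputable def q1 (ε : ℝ) : Measure ℝ :=
  unifOn 0 ε (1/2 - ε) + unifOn (3/4) (3/4 + 3*ε) (3*ε) + unifOn (1-ε) 1 (1/2 - 2*ε)

/-- Player 2's measure: `3ε` on `(ε,2ε)`, `1/2 - 2ε` on `(1/4-ε, 1/4)`,
`1/2 - ε` on `(1/2, 1/2+ε)`, uniform within each interval. -/
noncomputable def q2 (ε : ℝ) : Measure ℝ :=
  unifOn ε (2*ε) (3*ε) + unifOn (1/4 - ε) (1/4) (1/2 - 2*ε) +
    unifOn (1/2) (1/2 + ε) (1/2 - ε)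

/-- The uniform (Lebesgue) measure on `[0,1]` (players 3 and 4). -/
noncomputable def qU : Measure ℝ := volume.restrict (Set.Icc (0:ℝ) 1)

noncomputable def vEg4' (ε : ℝ) : Fin 4 → Measure ℝ := ![q1 ε, q2 ε, qU, qU]

/-!
Suppose a complete envy-free connected division gives every player more than `1/4 + 2ε`. The two
Lebesgue players then hold more than `1/2 + 4ε` of the length. The piece at the right end of the
cake is player 1's: any other piece there starts below `3/4` (a Lebesgue player's because it is
long, player 2's because she values nothing beyond `1/2 + ε`), so it contains both of player 1's
right-hand blocks, worth `1/2 + ε` to her, while her own piece, disjoint from them, is worth at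
most `1/2 - ε`. In the same way the piece at the left end is player 2's. Player 2 values
`(0, 1/4 - ε)` at only `3ε`, so her piece is longer than `1/4 - ε` and contains player 1's block
`(0, ε)`; envy-freeness then keeps player 1's piece from starting beyond `3/4 + 3ε`, and the four
lengths add up to more than `1`.

The partial division escapes this by discarding `(1 - ε, 1)`, which only player 1 values.
-/

namespace ConnDiv

variable {n : ℕ} (d : ConnDiv n)

def ofIoo (l r : Fin n → ℝ) (hl : ∀ i, 0 ≤ l i) (hr : ∀ i, r i ≤ 1)
    (hlr : Pairwise fun i j => r i ≤ l j ∨ r j ≤ l i) : ConnDiv n where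
  pieces i := Ioo (l i) (r i)
  isInterval i := ⟨l i, r i, rfl⟩
  subset i _ hx := ⟨(hl i).trans hx.1.le, hx.2.le.trans (hr i)⟩
  disj _ _ hij := Ioo_disjoint_Ioo.2 <| (hlr hij).elim
    (fun h => (min_le_left _ _).trans (h.trans (le_max_right _ _)))
    (fun h => (min_le_right _ _).trans (h.trans (le_max_left _ _)))

theorem measurableSet_pieces (i : Fin n) : MeasurableSet (d.pieces i) := by
  obtain ⟨a, b, h⟩ := d.isInterval i
  exact h ▸ measurableSet_Ioo

theorem volume_pieces_ne_top (i : Fin n) : volume (d.pieces i) ≠ ∞ :=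
  measure_ne_top_of_subset (d.subset i) measure_Icc_lt_top.ne

theorem sum_measureReal_pieces_le_one : ∑ i, volume.real (d.pieces i) ≤ 1 := by
  rw [← measureReal_iUnion_fintype d.disj d.measurableSet_pieces d.volume_pieces_ne_top]
  calc volume.real (⋃ i, d.pieces i) ≤ volume.real (Icc (0 : ℝ) 1) :=
        measureReal_mono (iUnion_subset d.subset) measure_Icc_lt_top.ne
    _ = 1 := by simp

theorem qU_pieces (i : Fin n) : qU (d.pieces i) = volume (d.pieces i) := by
  rw [qU, Measure.restrict_apply' measurableSet_Icc, inter_eq_self_of_subset_left (d.subset i)]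

theorem lt_measureReal_of_ofReal_lt_qU {c : ℝ} {i : Fin n} (hc : 0 ≤ c)
    (h : ENNReal.ofReal c < qU (d.pieces i)) : c < volume.real (d.pieces i) := by
  rwa [qU_pieces, ENNReal.ofReal_lt_iff_lt_toReal hc (d.volume_pieces_ne_top i)] at h

theorem lt_apply_pieces_of_lt_egal {v : Fin n → Measure ℝ} {c : ℝ≥0∞} (h : c < egal v d)
    (i : Fin n) : c < v i (d.pieces i) :=
  h.trans_le (iInf_le _ i)

theorem exists_Ioo_of_mem_closure {i : Fin n} {x : ℝ} (hx : x ∈ closure (d.pieces i)) :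
    ∃ a b, a < b ∧ d.pieces i = Ioo a b ∧ x ∈ Icc a b ∧ 0 ≤ a ∧ b ≤ 1 := by
  obtain ⟨a, b, h⟩ := d.isInterval i
  have hab : a < b := by
    by_contra hba
    rw [h, Ioo_eq_empty hba, closure_empty] at hx
    exact hx
  have hcl : closure (d.pieces i) = Icc a b := h ▸ closure_Ioo hab.ne
  have hsub : Icc a b ⊆ Icc 0 1 := hcl ▸ closure_minimal (d.subset i) isClosed_Icc
  exact ⟨a, b, hab, h, hcl ▸ hx, (hsub (left_mem_Icc.2 hab.le)).1,
    (hsub (right_mem_Icc.2 hab.le)).2⟩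

theorem exists_pieces_eq_Ioo_one (hc : d.Complete) : ∃ i a, a < 1 ∧ d.pieces i = Ioo a 1 := by
  obtain ⟨i, hi⟩ := mem_iUnion.1 (hc (right_mem_Icc.2 zero_le_one))
  obtain ⟨a, b, hab, h, hx, -, hb⟩ := d.exists_Ioo_of_mem_closure hi
  obtain rfl : b = 1 := le_antisymm hb hx.2
  exact ⟨i, a, hab, h⟩

theorem exists_pieces_eq_Ioo_zero (hc : d.Complete) : ∃ i b, 0 < b ∧ d.pieces i = Ioo 0 b := by
  obtain ⟨i, hi⟩ := mem_iUnion.1 (hc (left_mem_Icc.2 zero_le_one))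
  obtain ⟨a, b, hab, h, hx, ha, -⟩ := d.exists_Ioo_of_mem_closure hi
  obtain rfl : a = 0 := le_antisymm hx.1 ha
  exact ⟨i, b, hab, h⟩

theorem not_complete_of_subset_Iic {c : ℝ} (hc : c < 1) (h : ∀ i, d.pieces i ⊆ Iic c) :
    ¬ d.Complete := fun hcomp => by
  obtain ⟨i, hi⟩ := mem_iUnion.1 (hcomp (right_mem_Icc.2 zero_le_one))
  exact hc.not_ge (closure_minimal (h i) isClosed_Iic hi)

end ConnDiv

section unifOn

variable {a b m : ℝ}

theorem unifOn_apply (S : Set ℝ) :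
    unifOn a b m S = ENNReal.ofReal (m / (b - a)) * volume (S ∩ Ioo a b) := by
  rw [unifOn, Measure.smul_apply, Measure.restrict_apply' measurableSet_Ioo, smul_eq_mul]

theorem unifOn_eq_of_Ioo_subset (hab : a < b) (hm : 0 ≤ m) {S : Set ℝ} (h : Ioo a b ⊆ S) :
    unifOn a b m S = ENNReal.ofReal m := by
  rw [unifOn_apply, inter_eq_self_of_subset_right h, Real.volume_Ioo,
    ← ENNReal.ofReal_mul (div_nonneg hm (sub_pos.2 hab).le), div_mul_cancel₀ m (sub_pos.2 hab).ne']

theorem unifOn_le (hab : a < b) (hm : 0 ≤ m) (S : Set ℝ) : unifOn a b m S ≤ ENNReal.ofReal m :=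
  (measure_mono (subset_univ S)).trans_eq (unifOn_eq_of_Ioo_subset hab hm (subset_univ _))

theorem unifOn_eq_zero_of_disjoint {S : Set ℝ} (h : Disjoint S (Ioo a b)) : unifOn a b m S = 0 := by
  rw [unifOn_apply, h.inter_eq, measure_empty, mul_zero]

theorem unifOn_Ioo_of_le_of_le {c e : ℝ} (hab : a < b) (hm : 0 ≤ m) (hc : c ≤ a) (he : b ≤ e) :
    unifOn a b m (Ioo c e) = ENNReal.ofReal m :=
  unifOn_eq_of_Ioo_subset hab hm (Ioo_subset_Ioo hc he)

theorem unifOn_Ioo_eq_zero_of_le {c e : ℝ} (h : e ≤ a) : unifOn a b m (Ioo c e) = 0 :=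
  unifOn_eq_zero_of_disjoint <| Ioo_disjoint_Ioo.2 <|
    (min_le_left _ _).trans (h.trans (le_max_right _ _))

theorem unifOn_Ioo_eq_zero_of_ge {c e : ℝ} (h : b ≤ c) : unifOn a b m (Ioo c e) = 0 :=
  unifOn_eq_zero_of_disjoint <| Ioo_disjoint_Ioo.2 <|
    (min_le_right _ _).trans (h.trans (le_max_left _ _))

end unifOn

theorem qU_Ioo {a b : ℝ} (ha : 0 ≤ a) (hb : b ≤ 1) : qU (Ioo a b) = ENNReal.ofReal (b - a) := by
  rw [qU, Measure.restrict_apply' measurableSet_Icc,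
    inter_eq_self_of_subset_left (Ioo_subset_Icc_self.trans (Icc_subset_Icc ha hb)),
    Real.volume_Ioo]

section Instance

variable {ε : ℝ}

theorem q1_apply (S : Set ℝ) : q1 ε S =
    unifOn 0 ε (1/2 - ε) S + unifOn (3/4) (3/4 + 3*ε) (3*ε) S + unifOn (1-ε) 1 (1/2 - 2*ε) S :=
  rfl

theorem q2_apply (S : Set ℝ) : q2 ε S =
    unifOn ε (2*ε) (3*ε) S + unifOn (1/4 - ε) (1/4) (1/2 - 2*ε) S +
      unifOn (1/2) (1/2 + ε) (1/2 - ε) S :=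
  rfl

theorem ofReal_le_q1_Ioo_zero (hε : 0 < ε) (hε' : ε < 1/100) {b : ℝ} (hb : ε ≤ b) :
    ENNReal.ofReal (1/2 - ε) ≤ q1 ε (Ioo 0 b) := by
  rw [q1_apply, unifOn_Ioo_of_le_of_le hε (by linarith) le_rfl hb, add_assoc]
  exact le_self_add

theorem ofReal_le_q1_Ioo_one (hε : 0 < ε) (hε' : ε < 1/100) {a : ℝ} (ha : a ≤ 3/4) :
    ENNReal.ofReal (1/2 + ε) ≤ q1 ε (Ioo a 1) :=
  calc ENNReal.ofReal (1/2 + ε) = ENNReal.ofReal (3*ε) + ENNReal.ofReal (1/2 - 2*ε) := by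
        rw [← ENNReal.ofReal_add (by linarith) (by linarith)]; ring_nf
    _ ≤ q1 ε (Ioo a 1) := by
        rw [q1_apply, add_assoc,
          unifOn_Ioo_of_le_of_le (by linarith) (by linarith) ha (by linarith),
          unifOn_Ioo_of_le_of_le (by linarith) (by linarith) (by linarith) le_rfl]
        exact le_add_self

theorem q1_le_of_disjoint (hε : 0 < ε) (hε' : ε < 1/100) {S : Set ℝ}
    (h₂ : Disjoint S (Ioo (3/4) (3/4 + 3*ε))) (h₃ : Disjoint S (Ioo (1-ε) 1)) :
    q1 ε S ≤ ENNReal.ofReal (1/2 - ε) := by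
  rw [q1_apply, unifOn_eq_zero_of_disjoint h₂, unifOn_eq_zero_of_disjoint h₃, add_zero, add_zero]
  exact unifOn_le hε (by linarith) S

theorem q1_Ioo_one_le (hε : 0 < ε) (hε' : ε < 1/100) {a : ℝ} (ha : 3/4 + 3*ε ≤ a) :
    q1 ε (Ioo a 1) ≤ ENNReal.ofReal (1/2 - 2*ε) := by
  rw [q1_apply, unifOn_Ioo_eq_zero_of_ge (by linarith), unifOn_Ioo_eq_zero_of_ge ha,
    zero_add, zero_add]
  exact unifOn_le (by linarith) (by linarith) _

theorem q1_Ioo_two_mul_one_sub (hε : 0 < ε) (hε' : ε < 1/100) :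
    q1 ε (Ioo (2*ε) (1-ε)) = ENNReal.ofReal (3*ε) := by
  rw [q1_apply, unifOn_Ioo_eq_zero_of_ge (by linarith),
    unifOn_Ioo_of_le_of_le (by linarith) (by linarith) (by linarith) (by linarith),
    unifOn_Ioo_eq_zero_of_le le_rfl, zero_add, add_zero]

theorem ofReal_le_q2_Ioo_zero (hε : 0 < ε) (hε' : ε < 1/100) {b : ℝ} (hb : 1/4 ≤ b) :
    ENNReal.ofReal (1/2 + ε) ≤ q2 ε (Ioo 0 b) :=
  calc ENNReal.ofReal (1/2 + ε) = ENNReal.ofReal (3*ε) + ENNReal.ofReal (1/2 - 2*ε) := by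
        rw [← ENNReal.ofReal_add (by linarith) (by linarith)]; ring_nf
    _ ≤ q2 ε (Ioo 0 b) := by
        rw [q2_apply, unifOn_Ioo_of_le_of_le (by linarith) (by linarith) hε.le (by linarith),
          unifOn_Ioo_of_le_of_le (by linarith) (by linarith) (by linarith) hb]
        exact le_self_add

theorem q2_le_of_disjoint (hε : 0 < ε) (hε' : ε < 1/100) {S : Set ℝ}
    (h₁ : Disjoint S (Ioo ε (2*ε))) (h₂ : Disjoint S (Ioo (1/4 - ε) (1/4))) :
    q2 ε S ≤ ENNReal.ofReal (1/2 - ε) := by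
  rw [q2_apply, unifOn_eq_zero_of_disjoint h₁, unifOn_eq_zero_of_disjoint h₂, zero_add, zero_add]
  exact unifOn_le (by linarith) (by linarith) S

theorem q2_Ioo_zero_le (hε : 0 < ε) (hε' : ε < 1/100) {b : ℝ} (hb : b ≤ 1/4 - ε) :
    q2 ε (Ioo 0 b) ≤ ENNReal.ofReal (3*ε) := by
  rw [q2_apply, unifOn_Ioo_eq_zero_of_le hb, unifOn_Ioo_eq_zero_of_le (a := 1/2) (by linarith),
    add_zero, add_zero]
  exact unifOn_le (by linarith) (by linarith) _

theorem q2_Ioo_eq_zero (hε : 0 < ε) (hε' : ε < 1/100) {a e : ℝ} (ha : 1/2 + ε ≤ a) :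
    q2 ε (Ioo a e) = 0 := by
  rw [q2_apply, unifOn_Ioo_eq_zero_of_ge (by linarith), unifOn_Ioo_eq_zero_of_ge (by linarith),
    unifOn_Ioo_eq_zero_of_ge ha, add_zero, add_zero]

theorem q2_Ioo_two_mul_half (hε : 0 < ε) (hε' : ε < 1/100) :
    q2 ε (Ioo (2*ε) (1/2)) = ENNReal.ofReal (1/2 - 2*ε) := by
  rw [q2_apply, unifOn_Ioo_eq_zero_of_ge le_rfl,
    unifOn_Ioo_of_le_of_le (by linarith) (by linarith) (by linarith) (by linarith),
    unifOn_Ioo_eq_zero_of_le le_rfl, zero_add, add_zero]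

theorem q2_Ioo_half (hε : 0 < ε) (hε' : ε < 1/100) :
    q2 ε (Ioo (1/2) (1/2 + ε)) = ENNReal.ofReal (1/2 - ε) := by
  rw [q2_apply, unifOn_Ioo_eq_zero_of_ge (by linarith), unifOn_Ioo_eq_zero_of_ge (by linarith),
    unifOn_Ioo_of_le_of_le (by linarith) (by linarith) le_rfl le_rfl, zero_add, zero_add]

end Instance

section Complete

variable {ε : ℝ} {d : ConnDiv 4}

theorem eq_zero_of_pieces_eq_Ioo_one (hε : 0 < ε) (hε' : ε < 1/100)
    (hef : EnvyFree (vEg4' ε) d) {i : Fin 4} {a : ℝ} (hi : d.pieces i = Ioo a 1) (ha : a ≤ 3/4) :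
    i = 0 := by
  by_contra hi0
  have hdisj : Disjoint (d.pieces 0) (Ioo a 1) := hi ▸ d.disj (Ne.symm hi0)
  have hle : ENNReal.ofReal (1/2 + ε) ≤ ENNReal.ofReal (1/2 - ε) :=
    calc ENNReal.ofReal (1/2 + ε) ≤ q1 ε (d.pieces i) := hi ▸ ofReal_le_q1_Ioo_one hε hε' ha
      _ ≤ q1 ε (d.pieces 0) := hef 0 i
      _ ≤ ENNReal.ofReal (1/2 - ε) := q1_le_of_disjoint hε hε'
          (hdisj.mono_right (Ioo_subset_Ioo (by linarith) (by linarith)))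
          (hdisj.mono_right (Ioo_subset_Ioo (by linarith) le_rfl))
  linarith [(ENNReal.ofReal_le_ofReal_iff (by linarith)).1 hle]

theorem eq_one_of_pieces_eq_Ioo_zero (hε : 0 < ε) (hε' : ε < 1/100)
    (hef : EnvyFree (vEg4' ε) d) {j : Fin 4} {b : ℝ} (hj : d.pieces j = Ioo 0 b) (hb : 1/4 ≤ b) :
    j = 1 := by
  by_contra hj1
  have hdisj : Disjoint (d.pieces 1) (Ioo 0 b) := hj ▸ d.disj (Ne.symm hj1)
  have hle : ENNReal.ofReal (1/2 + ε) ≤ ENNReal.ofReal (1/2 - ε) :=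
    calc ENNReal.ofReal (1/2 + ε) ≤ q2 ε (d.pieces j) := hj ▸ ofReal_le_q2_Ioo_zero hε hε' hb
      _ ≤ q2 ε (d.pieces 1) := hef 1 j
      _ ≤ ENNReal.ofReal (1/2 - ε) := q2_le_of_disjoint hε hε'
          (hdisj.mono_right (Ioo_subset_Ioo hε.le (by linarith)))
          (hdisj.mono_right (Ioo_subset_Ioo (by linarith) hb))
  linarith [(ENNReal.ofReal_le_ofReal_iff (by linarith)).1 hle]

section

variable (hε : 0 < ε) (hε' : ε < 1/100) (hc : d.Complete) (hef : EnvyFree (vEg4' ε) d)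
  (hv : ENNReal.ofReal (1/4 + 2*ε) < egal (vEg4' ε) d)
include hε hε' hv

theorem lt_measureReal_pieces_of_qU {k : Fin 4} (hk : vEg4' ε k = qU) :
    1/4 + 2*ε < volume.real (d.pieces k) :=
  d.lt_measureReal_of_ofReal_lt_qU (by linarith) (hk ▸ d.lt_apply_pieces_of_lt_egal hv k)

include hc hef

theorem exists_pieces_zero_eq_Ioo_one : ∃ a < 1, d.pieces 0 = Ioo a 1 := by
  obtain ⟨i, a, ha1, hi⟩ := d.exists_pieces_eq_Ioo_one hc
  have hlen (hk : vEg4' ε i = qU) : a ≤ 3/4 := by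
    have := lt_measureReal_pieces_of_qU hε hε' hv hk
    rw [hi, Real.volume_real_Ioo_of_le ha1.le] at this
    linarith
  obtain rfl : i = 0 := by
    fin_cases i
    · rfl
    · refine eq_zero_of_pieces_eq_Ioo_one hε hε' hef hi (not_lt.1 fun ha => ?_)
      have hq2 : ENNReal.ofReal (1/4 + 2*ε) < q2 ε (Ioo a 1) :=
        hi ▸ d.lt_apply_pieces_of_lt_egal hv 1
      rw [q2_Ioo_eq_zero hε hε' (by linarith)] at hq2
      exact not_lt_zero hq2
    · exact eq_zero_of_pieces_eq_Ioo_one hε hε' hef hi (hlen rfl)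
    · exact eq_zero_of_pieces_eq_Ioo_one hε hε' hef hi (hlen rfl)
  exact ⟨a, ha1, hi⟩

theorem exists_pieces_one_eq_Ioo_zero {a : ℝ} (ha : 0 < a) (h0 : d.pieces 0 = Ioo a 1) :
    ∃ b > 0, d.pieces 1 = Ioo 0 b := by
  obtain ⟨j, b, hb0, hj⟩ := d.exists_pieces_eq_Ioo_zero hc
  have hlen (hk : vEg4' ε j = qU) : 1/4 ≤ b := by
    have := lt_measureReal_pieces_of_qU hε hε' hv hk
    rw [hj, Real.volume_real_Ioo_of_le hb0.le] at this
    linarith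
  obtain rfl : j = 1 := by
    fin_cases j
    · have : Ioo 0 b ⊆ Ioo a 1 := h0 ▸ hj.symm.subset
      linarith [((Ioo_subset_Ioo_iff hb0).1 this).1]
    · rfl
    · exact eq_one_of_pieces_eq_Ioo_zero hε hε' hef hj (hlen rfl)
    · exact eq_one_of_pieces_eq_Ioo_zero hε hε' hef hj (hlen rfl)
  exact ⟨b, hb0, hj⟩

end

theorem egal_vEg4'_le_of_complete (hε : 0 < ε) (hε' : ε < 1/100) (hc : d.Complete)
    (hef : EnvyFree (vEg4' ε) d) : egal (vEg4' ε) d ≤ ENNReal.ofReal (1/4 + 2*ε) := by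
  by_contra! hv
  have h2 := lt_measureReal_pieces_of_qU hε hε' hv (k := 2) rfl
  have h3 := lt_measureReal_pieces_of_qU hε hε' hv (k := 3) rfl
  have hsum := d.sum_measureReal_pieces_le_one
  obtain ⟨a, ha1, h0⟩ := exists_pieces_zero_eq_Ioo_one hε hε' hc hef hv
  rw [Fin.sum_univ_four, h0, Real.volume_real_Ioo_of_le ha1.le] at hsum
  obtain ⟨b, hb0, h1⟩ := exists_pieces_one_eq_Ioo_zero hε hε' hc hef hv
    (by linarith [measureReal_nonneg (μ := volume) (s := d.pieces 1)]) h0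
  rw [h1, Real.volume_real_Ioo_of_le hb0.le] at hsum
  have hb : 1/4 - ε < b := by
    by_contra! hb
    have hq2 : ENNReal.ofReal (1/4 + 2*ε) < ENNReal.ofReal (3*ε) :=
      (h1 ▸ d.lt_apply_pieces_of_lt_egal hv 1).trans_le (q2_Ioo_zero_le hε hε' hb)
    linarith [(ENNReal.ofReal_lt_ofReal_iff (by linarith)).1 hq2]
  have ha : a < 3/4 + 3*ε := by
    by_contra! ha
    have hq1 : ENNReal.ofReal (1/2 - ε) ≤ ENNReal.ofReal (1/2 - 2*ε) :=
      calc ENNReal.ofReal (1/2 - ε) ≤ q1 ε (d.pieces 1) :=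
            h1 ▸ ofReal_le_q1_Ioo_zero hε hε' (by linarith)
        _ ≤ q1 ε (d.pieces 0) := hef 0 1
        _ ≤ ENNReal.ofReal (1/2 - 2*ε) := h0 ▸ q1_Ioo_one_le hε hε' ha
    linarith [(ENNReal.ofReal_le_ofReal_iff (by linarith)).1 hq1]
  linarith

end Complete

section Partial

variable {ε : ℝ}

noncomputable def dumpingDivision (hε : 0 < ε) (hε' : ε < 1/100) : ConnDiv 4 :=
  ConnDiv.ofIoo ![0, 1/2, 2*ε, 1/2 + ε] ![2*ε, 1/2 + ε, 1/2, 1 - ε]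
    (fun i => by fin_cases i <;> simp only [Fin.zero_eta, Fin.mk_one, Fin.reduceFinMk,
      Matrix.cons_val] <;> linarith)
    (fun i => by fin_cases i <;> simp only [Fin.zero_eta, Fin.mk_one, Fin.reduceFinMk,
      Matrix.cons_val] <;> linarith)
    (fun i j hij => by
      fin_cases i <;> fin_cases j <;> first
        | exact absurd rfl hij
        | simp only [Fin.zero_eta, Fin.mk_one, Fin.reduceFinMk, Matrix.cons_val]
          first | (left; linarith) | (right; linarith))

variable (hε : 0 < ε) (hε' : ε < 1/100)
include hε hε'

theorem envyFree_dumpingDivision : EnvyFree (vEg4' ε) (dumpingDivision hε hε') := by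
  have hq1 : q1 ε (Ioo (2*ε) (1-ε)) ≤ q1 ε (Ioo 0 (2*ε)) := by
    rw [q1_Ioo_two_mul_one_sub hε hε']
    exact (ENNReal.ofReal_le_ofReal (by linarith)).trans
      (ofReal_le_q1_Ioo_zero hε hε' (by linarith))
  have hq2₀ : q2 ε (Ioo 0 (2*ε)) ≤ ENNReal.ofReal (1/2 - ε) :=
    (q2_Ioo_zero_le hε hε' (by linarith)).trans (ENNReal.ofReal_le_ofReal (by linarith))
  have hq2₂ : q2 ε (Ioo (2*ε) (1/2)) ≤ ENNReal.ofReal (1/2 - ε) :=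
    (q2_Ioo_two_mul_half hε hε').trans_le (ENNReal.ofReal_le_ofReal (by linarith))
  have hq2₃ : q2 ε (Ioo (1/2 + ε) (1 - ε)) ≤ ENNReal.ofReal (1/2 - ε) :=
    (q2_Ioo_eq_zero hε hε' le_rfl).trans_le zero_le
  intro i j
  fin_cases i <;> fin_cases j <;>
    simp only [dumpingDivision, ConnDiv.ofIoo, vEg4', Fin.zero_eta, Fin.mk_one, Fin.reduceFinMk,
      Matrix.cons_val] <;>
    first
    | exact le_rfl
    | exact (measure_mono (Ioo_subset_Ioo (by linarith) (by linarith))).trans hq1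
    | rwa [q2_Ioo_half hε hε']
    | rw [qU_Ioo (by linarith) (by linarith), qU_Ioo (by linarith) (by linarith)]
      exact ENNReal.ofReal_le_ofReal (by linarith)

theorem ofReal_le_egal_dumpingDivision :
    ENNReal.ofReal (1/2 - 2*ε) ≤ egal (vEg4' ε) (dumpingDivision hε hε') := by
  refine le_iInf fun i => ?_
  fin_cases i <;>
    simp only [dumpingDivision, ConnDiv.ofIoo, vEg4', Fin.zero_eta, Fin.mk_one, Fin.reduceFinMk,
      Matrix.cons_val]
  · exact (ENNReal.ofReal_le_ofReal (by linarith)).trans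
      (ofReal_le_q1_Ioo_zero hε hε' (by linarith))
  · exact (ENNReal.ofReal_le_ofReal (by linarith)).trans_eq (q2_Ioo_half hε hε').symm
  all_goals
    exact (ENNReal.ofReal_le_ofReal (by linarith)).trans_eq
      (qU_Ioo (by linarith) (by linarith)).symm

theorem not_complete_dumpingDivision : ¬ (dumpingDivision hε hε').Complete := by
  refine ConnDiv.not_complete_of_subset_Iic _ (c := 1 - ε) (by linarith) fun i =>
    Ioo_subset_Iio_self.trans (Iio_subset_Iic_self.trans (Iic_subset_Iic.2 ?_))
  fin_cases i <;> simp <;> linarith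

end Partial

/-- For 4 players, every envy-free complete connected division has egalitarian
welfare at most `1/4 + 2ε`, while some envy-free partial connected division has
egalitarian welfare at least `1/2 - 2ε`; hence the 4-player egalitarian dumping
paradox gets arbitrarily close to `2`. -/
theorem egalitarian_dumping_four_players' (ε : ℝ) (hε : 0 < ε) (hε' : ε < 1/100) :
    (∀ d : ConnDiv 4, d.Complete → EnvyFree (vEg4' ε) d →
      egal (vEg4' ε) d ≤ ENNReal.ofReal (1/4 + 2*ε)) ∧
    (∃ y : ConnDiv 4,
      y.pieces 0 = Set.Ioo 0 (2*ε) ∧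
      y.pieces 2 = Set.Ioo (2*ε) (1/2) ∧
      y.pieces 1 = Set.Ioo (1/2) (1/2 + ε) ∧
      y.pieces 3 = Set.Ioo (1/2 + ε) (1 - ε) ∧
      EnvyFree (vEg4' ε) y ∧ ¬ y.Complete ∧
      ENNReal.ofReal (1/2 - 2*ε) ≤ egal (vEg4' ε) y) :=
  ⟨fun _ hc hef => egal_vEg4'_le_of_complete hε hε' hc hef,
    dumpingDivision hε hε', rfl, rfl, rfl, rfl, envyFree_dumpingDivision hε hε',
    not_complete_dumpingDivision hε hε', ofReal_le_egal_dumpingDivision hε hε'⟩
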